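/- If x₀ ∈ C and h(x(t)) satisfies ḣ(x(t)) ≥ -α(h(x(t))) for all t ≥ t₀ where α is a locally Lipschitz class-K function, then h(x(t)) ≥ 0 for all t ≥ t₀, i.e., the set C = {x : h(x) ≥ 0} is forward invariant. -/

import Mathlib

open Set

/-- At the last time `s ≤ b` where `y` is nonnegative, `y` would have to increase across the
interval `[s, b]` on which it is negative, so it cannot end below zero. -/
theorem nonneg_of_deriv_pos_of_neg {y : ℝ → ℝ} {a b : ℝ} (hab : a ≤ b)
    (hy : ContinuousOn y (Icc a b)) (ha : 0 ≤ y a)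
    (hderiv : ∀ t ∈ Ioo a b, y t < 0 → 0 < deriv y t) : 0 ≤ y b := by
  by_contra! hb
  set S := Icc a b ∩ y ⁻¹' Ici 0
  have hS_compact : IsCompact S :=
    isCompact_Icc.of_isClosed_subset
      (hy.preimage_isClosed_of_isClosed isClosed_Icc isClosed_Ici) inter_subset_left
  obtain ⟨s, ⟨⟨has, hsb⟩, hys⟩, hs_greatest⟩ :=
    hS_compact.exists_isGreatest ⟨a, ⟨left_mem_Icc.2 hab, ha⟩⟩
  have hs_lt_b : s < b := hsb.lt_of_ne fun hsb => hb.not_ge (hsb ▸ hys)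
  have hneg_after : ∀ t ∈ Ioc s b, y t < 0 := fun t ⟨hst, htb⟩ => by
    by_contra! hyt
    exact (hs_greatest ⟨⟨has.trans hst.le, htb⟩, hyt⟩).not_gt hst
  have hmono : StrictMonoOn y (Icc s b) := by
    refine strictMonoOn_of_deriv_pos (convex_Icc s b)
      (hy.mono (Icc_subset_Icc_left has)) fun t ht => ?_
    rw [interior_Icc] at ht
    exact hderiv t ⟨has.trans_lt ht.1, ht.2⟩ (hneg_after t (Ioo_subset_Ioc_self ht))
  have hys : 0 ≤ y s := hys
  linarith [hmono (left_mem_Icc.2 hsb) (right_mem_Icc.2 hsb) hs_lt_b]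

theorem forward_invariance_comparison_general
    {n : ℕ} (h : EuclideanSpace ℝ (Fin n) → ℝ) (hh : ContDiff ℝ 1 h)
    (x : ℝ → EuclideanSpace ℝ (Fin n)) (hx : ContDiff ℝ 1 x)
    (α : ℝ → ℝ) (hα_mono : StrictMono α) (hα0 : α 0 = 0)
    (t₀ : ℝ) (hinit : h (x t₀) ≥ 0)
    (hineq : ∀ t ≥ t₀, deriv (fun s => h (x s)) t ≥ -α (h (x t))) :
    ∀ t ≥ t₀, h (x t) ≥ 0 := by
  intro t ht
  refine nonneg_of_deriv_pos_of_neg ht (hh.continuous.comp hx.continuous).continuousOn hinit ?_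
  intro s hs hneg
  have hα_neg : α (h (x s)) < 0 := hα0 ▸ hα_mono hneg
  calc 0 < -α (h (x s)) := neg_pos.2 hα_neg
    _ ≤ deriv (fun s => h (x s)) s := hineq s hs.1.le

/-- If x₀ ∈ C and ḣ(x(t)) ≥ -α(h(x(t))) for all t ≥ t₀, with α a
locally Lipschitz class-K function, then h(x(t)) ≥ 0 for all t ≥ t₀
(forward invariance of C = {x : h(x) ≥ 0}). -/
theorem forward_invariance_comparison
    {n : ℕ} (h : EuclideanSpace ℝ (Fin n) → ℝ) (hh : ContDiff ℝ 1 h)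
    (x : ℝ → EuclideanSpace ℝ (Fin n)) (hx : ContDiff ℝ 1 x)
    (α : ℝ → ℝ) (hα_lip : LocallyLipschitz α) (hα_mono : StrictMono α)
    (hα_cont : Continuous α) (hα0 : α 0 = 0)
    (t₀ : ℝ) (hinit : h (x t₀) ≥ 0)
    (hineq : ∀ t ≥ t₀, deriv (fun s => h (x s)) t ≥ -α (h (x t))) :
    ∀ t ≥ t₀, h (x t) ≥ 0 :=
  forward_invariance_comparison_general h hh x hx α hα_mono hα0 t₀ hinit hineq
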